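/- Let a > 0, R > 0, and set γ₀ := e^{-(π/a)(R - 1/(2a))}. If 0 < γ < γ₀, then the Gabor transforms 𝒢f_± of f_± := φ ± i γ T_{1/a} φ have no zeros in the strip (-R, R) × ℝ of the time-frequency plane. -/

import Mathlib

open MeasureTheory

/-- The Gabor transform with Gaussian window. -/
noncomputable def gabor (f : ℝ → ℂ) (x ω : ℝ) : ℂ :=
  (2 : ℂ) ^ ((1 : ℂ) / 4) *
    ∫ t : ℝ, f t * Complex.exp (-(Real.pi : ℂ) * ((t : ℂ) - (x : ℂ)) ^ 2) *
      Complex.exp (-2 * (Real.pi : ℂ) * Complex.I * (t : ℂ) * (ω : ℂ))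

/-- The normalized Gaussian φ(t) = 2^{1/4} e^{-π t²}. -/
noncomputable def gauss (t : ℝ) : ℂ :=
  (2 : ℂ) ^ ((1 : ℂ) / 4) * Complex.exp (-(Real.pi : ℂ) * (t : ℂ) ^ 2)

/-! The Gabor transform of a time-shifted Gaussian `T_s φ` is an explicit Gaussian exponential,
and `𝒢(T_{1/a} φ) = 𝒢φ · e^w` with `Re w = (π/a)(x - 1/(2a))`. By linearity
`𝒢f_± = 𝒢φ · (1 ± iγ e^w)`, and the second factor cannot vanish once `γ e^{Re w} < 1`, which for
`x < R` is exactly the condition `γ < γ₀`. -/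

open Complex

noncomputable def gaborIntegrand (f : ℝ → ℂ) (x ω t : ℝ) : ℂ :=
  f t * exp (-(Real.pi : ℂ) * ((t : ℂ) - (x : ℂ)) ^ 2) *
    exp (-2 * (Real.pi : ℂ) * I * (t : ℂ) * (ω : ℂ))

theorem gabor_eq_integral (f : ℝ → ℂ) (x ω : ℝ) :
    gabor f x ω = (2 : ℂ) ^ ((1 : ℂ) / 4) * ∫ t, gaborIntegrand f x ω t := rfl

lemma gabor_add_const_mul {f g : ℝ → ℂ} {x ω : ℝ} (hf : Integrable (gaborIntegrand f x ω))
    (hg : Integrable (gaborIntegrand g x ω)) (c : ℂ) :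
    gabor (fun t => f t + c * g t) x ω = gabor f x ω + c * gabor g x ω := by
  have h : gaborIntegrand (fun t => f t + c * g t) x ω =
      fun t => gaborIntegrand f x ω t + c * gaborIntegrand g x ω t := by
    ext t
    simp only [gaborIntegrand]
    ring
  rw [gabor_eq_integral, gabor_eq_integral f, gabor_eq_integral g, h,
    integral_add hf (hg.const_mul c), integral_const_mul]
  ring

-- The exponent is written in the shape `b t² + c t + d` of `integral_cexp_quadratic`.
lemma gaborIntegrand_gauss_shift (s x ω t : ℝ) :
    gaborIntegrand (fun t => gauss (t - s)) x ω t = (2 : ℂ) ^ ((1 : ℂ) / 4) *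
      exp (-2 * Real.pi * t ^ 2 + (2 * Real.pi * (s + x) - 2 * Real.pi * I * ω) * t
        + -(Real.pi * (s ^ 2 + x ^ 2))) := by
  simp only [gaborIntegrand, gauss, mul_assoc, ← exp_add]
  push_cast
  ring_nf

lemma neg_two_mul_pi_re_lt_zero : (-2 * (Real.pi : ℂ)).re < 0 := by
  simpa using Real.pi_pos

lemma integrable_gaborIntegrand_gauss_shift (s x ω : ℝ) :
    Integrable (gaborIntegrand (fun t => gauss (t - s)) x ω) := by
  simp_rw [funext (gaborIntegrand_gauss_shift s x ω)]
  exact (integrable_cexp_quadratic' neg_two_mul_pi_re_lt_zero _ _).const_mul _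

lemma two_cpow_quarter_mul_self_mul_half_cpow_half :
    (2 : ℂ) ^ ((1 : ℂ) / 4) * (2 : ℂ) ^ ((1 : ℂ) / 4) * (1 / 2 : ℂ) ^ ((1 : ℂ) / 2) = 1 := by
  rw [← cpow_add _ _ two_ne_zero]
  have hquarter : ((1 : ℂ) / 4 + 1 / 4) = 1 / 2 := by norm_num
  have h := mul_cpow_ofReal_nonneg (a := 2) (b := 1 / 2) (by norm_num) (by norm_num) (1 / 2)
  push_cast at h
  rw [hquarter, ← h]
  norm_num

theorem gabor_gauss_shift (s x ω : ℝ) :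
    gabor (fun t => gauss (t - s)) x ω =
      exp (-(Real.pi / 2) * ((x - s) ^ 2 + ω ^ 2) - Real.pi * I * ω * (x + s)) := by
  rw [gabor_eq_integral, funext (gaborIntegrand_gauss_shift s x ω), integral_const_mul,
    integral_cexp_quadratic neg_two_mul_pi_re_lt_zero, ← mul_assoc, ← mul_assoc]
  have hhalf : (Real.pi : ℂ) / -(-2 * Real.pi) = 1 / 2 := by field_simp
  rw [hhalf, two_cpow_quarter_mul_self_mul_half_cpow_half, one_mul]
  congr 1
  field_simp
  ring_nf
  rw [I_sq]
  ring

theorem gabor_gauss (x ω : ℝ) :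
    gabor gauss x ω = exp (-(Real.pi / 2) * (x ^ 2 + ω ^ 2) - Real.pi * I * ω * x) := by
  simpa using gabor_gauss_shift 0 x ω

theorem gabor_gauss_shift_eq_mul (s x ω : ℝ) :
    gabor (fun t => gauss (t - s)) x ω =
      gabor gauss x ω * exp ((Real.pi * s * (x - s / 2) : ℝ) - (Real.pi * ω * s : ℝ) * I) := by
  rw [gabor_gauss_shift, gabor_gauss, ← exp_add]
  congr 1
  push_cast
  ring

lemma one_add_ne_zero_of_norm_lt_one {z : ℂ} (hz : ‖z‖ < 1) : 1 + z ≠ 0 := by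
  intro h
  have hz1 : z = -1 := by linear_combination h
  simp [hz1] at hz

lemma mul_exp_lt_one_of_lt_exp {a R γ x : ℝ} (ha : 0 < a) (hx : x < R)
    (hγ : γ < Real.exp (-(Real.pi / a) * (R - 1 / (2 * a)))) :
    γ * Real.exp (Real.pi * (1 / a) * (x - 1 / a / 2)) < 1 :=
  calc γ * Real.exp (Real.pi * (1 / a) * (x - 1 / a / 2))
      < Real.exp (-(Real.pi / a) * (R - 1 / (2 * a))) *
          Real.exp (Real.pi * (1 / a) * (x - 1 / a / 2)) :=
        mul_lt_mul_of_pos_right hγ (Real.exp_pos _)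
    _ = Real.exp (Real.pi / a * (x - R)) := by
        rw [← Real.exp_add]
        congr 1
        field_simp
        ring
    _ < 1 := Real.exp_lt_one_iff.mpr
        (mul_neg_of_pos_of_neg (div_pos Real.pi_pos ha) (sub_neg.mpr hx))

theorem gabor_counterexample_no_zeros_in_strip_general (a R γ : ℝ) (ha : 0 < a)
    (hγ0 : 0 < γ) (hγ : γ < Real.exp (-(Real.pi / a) * (R - 1 / (2 * a))))
    (ε : ℝ) (hε : ε = 1 ∨ ε = -1) (f : ℝ → ℂ)
    (hf : f = fun t => gauss t + (ε : ℂ) * Complex.I * (γ : ℂ) * gauss (t - 1 / a)) :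
    ∀ x ω : ℝ, x ∈ Set.Ioo (-R) R → gabor f x ω ≠ 0 := by
  intro x ω hx
  set w : ℂ := (Real.pi * (1 / a) * (x - 1 / a / 2) : ℝ) - (Real.pi * ω * (1 / a) : ℝ) * I
  have hint : Integrable (gaborIntegrand gauss x ω) := by
    simpa using integrable_gaborIntegrand_gauss_shift 0 x ω
  have hfactor : gabor f x ω = gabor gauss x ω * (1 + ε * I * γ * exp w) := by
    rw [hf, gabor_add_const_mul hint (integrable_gaborIntegrand_gauss_shift (1 / a) x ω),
      gabor_gauss_shift_eq_mul]
    ring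
  have hsmall : ‖(ε : ℂ) * I * γ * exp w‖ < 1 := by
    have hε1 : ‖(ε : ℂ)‖ = 1 := by rcases hε with rfl | rfl <;> simp
    have hwre : w.re = Real.pi * (1 / a) * (x - 1 / a / 2) := by simp [w]
    rw [norm_mul, norm_mul, norm_mul, hε1, norm_I, norm_exp, hwre, norm_real,
      Real.norm_of_nonneg hγ0.le, one_mul, one_mul]
    exact mul_exp_lt_one_of_lt_exp ha hx.2 hγ
  rw [hfactor, gabor_gauss]
  exact mul_ne_zero (exp_ne_zero _) (one_add_ne_zero_of_norm_lt_one hsmall)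

/-- If 0 < γ < γ₀ = e^{-(π/a)(R - 1/(2a))}, then 𝒢f_± has no zeros in the strip (-R,R) × ℝ. -/
theorem gabor_counterexample_no_zeros_in_strip (a R γ : ℝ) (ha : 0 < a) (hR : 0 < R)
    (hγ0 : 0 < γ) (hγ : γ < Real.exp (-(Real.pi / a) * (R - 1 / (2 * a))))
    (ε : ℝ) (hε : ε = 1 ∨ ε = -1) (f : ℝ → ℂ)
    (hf : f = fun t => gauss t + (ε : ℂ) * Complex.I * (γ : ℂ) * gauss (t - 1 / a)) :
    ∀ x ω : ℝ, x ∈ Set.Ioo (-R) R → gabor f x ω ≠ 0 :=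
  gabor_counterexample_no_zeros_in_strip_general a R γ ha hγ0 hγ ε hε f hf
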